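/- Let ω = e^{2πi/3} and define five vectors in ℂ^2: φ_1 = (1, 0), φ_2 = (0, 1), φ_3 = (1/√2)(1, 1), φ_4 = (1/√2)(1, ω), φ_5 = (1/√2)(1, ω²). Then each φ_j is a unit vector, ∑_{j=1}^5 φ_j φ_j* = (5/2)·I_2 (so Φ is a tight frame), and the angle set A_Φ = { |⟨φ_j, φ_l⟩| : j ≠ l } equals {1/√2, 1/2, 0}; in particular Φ is a triangular (3-angular) tight frame whose coherence is 1/√2. -/

import Mathlib

open Complex

/-- The primitive cube root of unity `ω = e^{2πi/3}`. -/
noncomputable def ω₃ : ℂ := Complex.exp (2 * Real.pi * Complex.I / 3)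

/-- The five vectors `(1,0)`, `(0,1)`, `(1/√2)(1,1)`, `(1/√2)(1,ω)`, `(1/√2)(1,ω²)`
in `ℂ²`. -/
noncomputable def Φtri : Fin 5 → EuclideanSpace ℂ (Fin 2) :=
  ![(WithLp.equiv 2 (Fin 2 → ℂ)).symm ![1, 0],
    (WithLp.equiv 2 (Fin 2 → ℂ)).symm ![0, 1],
    (WithLp.equiv 2 (Fin 2 → ℂ)).symm ![(Real.sqrt 2 : ℂ)⁻¹, (Real.sqrt 2 : ℂ)⁻¹],
    (WithLp.equiv 2 (Fin 2 → ℂ)).symm ![(Real.sqrt 2 : ℂ)⁻¹, (Real.sqrt 2 : ℂ)⁻¹ * ω₃],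
    (WithLp.equiv 2 (Fin 2 → ℂ)).symm ![(Real.sqrt 2 : ℂ)⁻¹, (Real.sqrt 2 : ℂ)⁻¹ * ω₃ ^ 2]]


/-! `Φtri` is the standard basis of `ℂ²` together with the harmonic frame `(1, ω^k)/√2`,
`k = 0, 1, 2`. The harmonic frame is `3/2`-tight because the cross terms of its frame operator
are the geometric sums `∑ ω^k = ∑ ω̄^k = 0`, so `Φtri` is `(1 + 3/2)`-tight. A basis vector and a
harmonic vector have inner product of modulus `1/√2`; two distinct harmonic vectors have inner
product `(1 + w)/2` with `w ≠ 1` a cube root of unity, and `1 + w = -w²` has modulus `1`. -/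

open scoped InnerProductSpace ComplexConjugate

lemma isPrimitiveRoot_ω₃ : IsPrimitiveRoot ω₃ 3 := by
  simpa [ω₃, mul_comm] using Complex.isPrimitiveRoot_exp 3 (by norm_num)

lemma norm_ω₃ : ‖ω₃‖ = 1 := isPrimitiveRoot_ω₃.norm'_eq_one (by norm_num)

lemma ω₃_pow_three : ω₃ ^ 3 = 1 := isPrimitiveRoot_ω₃.pow_eq_one

lemma ω₃_sq_pow_three : (ω₃ ^ 2) ^ 3 = 1 := by
  rw [← pow_mul, mul_comm, pow_mul, ω₃_pow_three, one_pow]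

lemma one_ne_ω₃ : (1 : ℂ) ≠ ω₃ := (isPrimitiveRoot_ω₃.ne_one (by norm_num)).symm

lemma one_ne_ω₃_sq : (1 : ℂ) ≠ ω₃ ^ 2 :=
  (isPrimitiveRoot_ω₃.pow_ne_one_of_pos_of_lt two_ne_zero (by norm_num)).symm

lemma ω₃_ne_ω₃_sq : ω₃ ≠ ω₃ ^ 2 := fun h ↦ absurd
  (isPrimitiveRoot_ω₃.pow_inj (i := 1) (j := 2) (by norm_num) (by norm_num) (by rwa [pow_one]))
  (by norm_num)

noncomputable def unbiasedVec (u : ℂ) : EuclideanSpace ℂ (Fin 2) :=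
  !₂[(√2 : ℂ)⁻¹, (√2 : ℂ)⁻¹ * u]

lemma inv_sqrt_two_sq : ((√2 : ℂ)⁻¹) ^ 2 = 1 / 2 := by
  rw [inv_pow, ← Complex.ofReal_pow, Real.sq_sqrt zero_le_two, one_div, Complex.ofReal_ofNat]

lemma inner_unbiasedVec (u v : ℂ) :
    ⟪unbiasedVec u, unbiasedVec v⟫_ℂ = (1 + conj u * v) / 2 := by
  simp only [unbiasedVec, PiLp.inner_apply, RCLike.inner_apply, Fin.sum_univ_two, Fin.isValue,
    Matrix.cons_val_zero, map_inv₀, conj_ofReal, Matrix.cons_val_one, Matrix.cons_val_fin_one,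
    map_mul]
  linear_combination (1 + conj u * v) * inv_sqrt_two_sq

lemma norm_unbiasedVec {u : ℂ} (hu : ‖u‖ = 1) : ‖unbiasedVec u‖ = 1 := by
  have h : ⟪unbiasedVec u, unbiasedVec u⟫_ℂ = 1 := by
    rw [inner_unbiasedVec, Complex.conj_mul', hu]; norm_num
  rw [norm_eq_sqrt_re_inner (𝕜 := ℂ), h]
  simp

lemma norm_unbiasedVec_apply (i : Fin 2) {u : ℂ} (hu : ‖u‖ = 1) :
    ‖unbiasedVec u i‖ = 1 / √2 := by
  fin_cases i <;> simp [unbiasedVec, hu]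

lemma norm_one_add_of_pow_three_eq_one {w : ℂ} (hw : w ^ 3 = 1) (hw1 : w ≠ 1) :
    ‖1 + w‖ = 1 := by
  have hsum : 1 + w + w ^ 2 = 0 := by
    have h : (w - 1) * (1 + w + w ^ 2) = 0 := by linear_combination hw
    exact (mul_eq_zero.1 h).resolve_left (sub_ne_zero.2 hw1)
  rw [show 1 + w = -w ^ 2 by linear_combination hsum, norm_neg, norm_pow,
    norm_eq_one_of_pow_eq_one hw three_ne_zero, one_pow]

lemma norm_inner_unbiasedVec_of_pow_three_eq_one {u v : ℂ} (hu : u ^ 3 = 1) (hv : v ^ 3 = 1)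
    (huv : u ≠ v) : ‖⟪unbiasedVec u, unbiasedVec v⟫_ℂ‖ = 1 / 2 := by
  have hu1 : conj u * u = 1 := by
    rw [Complex.conj_mul', norm_eq_one_of_pow_eq_one hu three_ne_zero]; norm_num
  have hw : (conj u * v) ^ 3 = 1 := by
    rw [mul_pow, ← map_pow, hu, hv, map_one, one_mul]
  have hw1 : conj u * v ≠ 1 := fun h ↦ huv <| by linear_combination -u * h + v * hu1
  rw [inner_unbiasedVec, norm_div, norm_one_add_of_pow_three_eq_one hw hw1]
  norm_num

lemma inner_unbiasedVec_left (u : ℂ) (x : EuclideanSpace ℂ (Fin 2)) :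
    ⟪unbiasedVec u, x⟫_ℂ = (√2 : ℂ)⁻¹ * (x 0 + conj u * x 1) := by
  simp only [unbiasedVec, PiLp.inner_apply, RCLike.inner_apply, Fin.sum_univ_two, Fin.isValue,
    Matrix.cons_val_zero, map_inv₀, conj_ofReal, Matrix.cons_val_one, Matrix.cons_val_fin_one,
    map_mul]
  ring

theorem sum_inner_smul_unbiasedVec_pow {ζ : ℂ} {n : ℕ} (hζ : IsPrimitiveRoot ζ n) (hn : 1 < n)
    (x : EuclideanSpace ℂ (Fin 2)) :
    ∑ k ∈ Finset.range n, ⟪unbiasedVec (ζ ^ k), x⟫_ℂ • unbiasedVec (ζ ^ k) = (n / 2 : ℂ) • x := by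
  have hgeom : ∑ k ∈ Finset.range n, ζ ^ k = 0 := hζ.geom_sum_eq_zero hn
  have hconj : ∑ k ∈ Finset.range n, conj ζ ^ k = 0 := by
    simpa only [map_sum, map_pow, map_zero] using congrArg conj hgeom
  have hunit : ∀ k, conj ζ ^ k * ζ ^ k = 1 := fun k ↦ by
    rw [← mul_pow, Complex.conj_mul', hζ.norm'_eq_one (by omega)]; norm_num
  ext i
  simp_rw [inner_unbiasedVec_left]
  fin_cases i <;>
    simp only [Fin.isValue, map_pow, unbiasedVec, Fin.zero_eta, Fin.mk_one, WithLp.ofLp_sum,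
      WithLp.ofLp_smul, Matrix.smul_cons, smul_eq_mul, Matrix.smul_empty, Finset.sum_apply,
      Matrix.cons_val_zero, Matrix.cons_val_one, Matrix.cons_val_fin_one, PiLp.smul_apply]
  · calc ∑ k ∈ Finset.range n, (√2 : ℂ)⁻¹ * (x 0 + conj ζ ^ k * x 1) * (√2 : ℂ)⁻¹
        = ∑ k ∈ Finset.range n, (x 0 + conj ζ ^ k * x 1) / 2 := by
          refine Finset.sum_congr rfl fun k _ ↦ ?_
          linear_combination (x 0 + conj ζ ^ k * x 1) * inv_sqrt_two_sq
      _ = n / 2 * x 0 := by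
          rw [← Finset.sum_div, Finset.sum_add_distrib, ← Finset.sum_mul, hconj]
          simp only [Finset.sum_const, Finset.card_range, nsmul_eq_mul, zero_mul, add_zero]
          ring
  · calc ∑ k ∈ Finset.range n, (√2 : ℂ)⁻¹ * (x 0 + conj ζ ^ k * x 1) * ((√2 : ℂ)⁻¹ * ζ ^ k)
        = ∑ k ∈ Finset.range n, (ζ ^ k * x 0 + x 1) / 2 := by
          refine Finset.sum_congr rfl fun k _ ↦ ?_
          linear_combination (ζ ^ k * x 0 + conj ζ ^ k * ζ ^ k * x 1) * inv_sqrt_two_sq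
            + x 1 / 2 * hunit k
      _ = n / 2 * x 1 := by
          rw [← Finset.sum_div, Finset.sum_add_distrib, ← Finset.sum_mul, hgeom]
          simp only [zero_mul, Finset.sum_const, Finset.card_range, nsmul_eq_mul, zero_add]
          ring

lemma Φtri_eq : Φtri = ![EuclideanSpace.single 0 1, EuclideanSpace.single 1 1, unbiasedVec 1,
    unbiasedVec ω₃, unbiasedVec (ω₃ ^ 2)] := by
  funext j
  fin_cases j <;> ext i <;> fin_cases i <;> simp [Φtri, unbiasedVec]

lemma sum_inner_smul_Φtri (x : EuclideanSpace ℂ (Fin 2)) :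
    ∑ j, ⟪Φtri j, x⟫_ℂ • Φtri j = (5 / 2 : ℂ) • x := by
  let e := EuclideanSpace.basisFun (Fin 2) ℂ
  calc ∑ j, ⟪Φtri j, x⟫_ℂ • Φtri j
      = ∑ i, ⟪e i, x⟫_ℂ • e i
        + ∑ k ∈ Finset.range 3, ⟪unbiasedVec (ω₃ ^ k), x⟫_ℂ • unbiasedVec (ω₃ ^ k) := by
        simp [Φtri_eq, e, Fin.sum_univ_five, Fin.sum_univ_two, Finset.sum_range_succ, add_assoc]
    _ = x + (3 / 2 : ℂ) • x := by
        rw [e.sum_repr', sum_inner_smul_unbiasedVec_pow isPrimitiveRoot_ω₃ (by norm_num)]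
        norm_num
    _ = (5 / 2 : ℂ) • x := by module

lemma norm_inner_Φtri_mem {j l : Fin 5} (hjl : j ≠ l) :
    ‖⟪Φtri j, Φtri l⟫_ℂ‖ ∈ ({1 / √2, 1 / 2, 0} : Set ℝ) := by
  fin_cases j <;> fin_cases l <;>
    simp_all [Φtri_eq, EuclideanSpace.inner_single_left, EuclideanSpace.inner_single_right,
      norm_unbiasedVec_apply, one_ne_ω₃, one_ne_ω₃_sq, ω₃_ne_ω₃_sq, Ne.symm,
      norm_inner_unbiasedVec_of_pow_three_eq_one, norm_ω₃,
      ω₃_pow_three, ω₃_sq_pow_three]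

lemma norm_Φtri (j : Fin 5) : ‖Φtri j‖ = 1 := by
  fin_cases j <;> simp [Φtri_eq, norm_unbiasedVec, norm_ω₃]

lemma angleSet_Φtri :
    {r : ℝ | ∃ j l, j ≠ l ∧ ‖⟪Φtri j, Φtri l⟫_ℂ‖ = r} = {1 / √2, 1 / 2, 0} := by
  ext r
  constructor
  · rintro ⟨j, l, hjl, rfl⟩
    exact norm_inner_Φtri_mem hjl
  · rintro (rfl | rfl | rfl)
    · exact ⟨0, 2, by decide,
        by simp [Φtri_eq, EuclideanSpace.inner_single_left, norm_unbiasedVec_apply]⟩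
    · refine ⟨2, 3, by decide, ?_⟩
      rw [Φtri_eq]
      exact norm_inner_unbiasedVec_of_pow_three_eq_one (one_pow 3) ω₃_pow_three one_ne_ω₃
    · exact ⟨0, 1, by decide, by simp [Φtri_eq, EuclideanSpace.inner_single_left]⟩

theorem triangular_tight_grassmannian_five_two :
    (∀ j, ‖Φtri j‖ = 1) ∧
    (∀ x : EuclideanSpace ℂ (Fin 2),
      ∑ j, (inner ℂ (Φtri j) x : ℂ) • Φtri j = (5 / 2 : ℂ) • x) ∧
    {r : ℝ | ∃ j l, j ≠ l ∧ ‖(inner ℂ (Φtri j) (Φtri l) : ℂ)‖ = r}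
      = {1 / Real.sqrt 2, 1 / 2, 0} ∧
    {r : ℝ | ∃ j l, j ≠ l ∧ ‖(inner ℂ (Φtri j) (Φtri l) : ℂ)‖ = r}.ncard = 3 ∧
    IsGreatest {r : ℝ | ∃ j l, j ≠ l ∧ ‖(inner ℂ (Φtri j) (Φtri l) : ℂ)‖ = r}
      (1 / Real.sqrt 2) := by
  have half_lt : (1 : ℝ) / 2 < 1 / √2 :=
    one_div_lt_one_div_of_lt (by positivity) ((Real.sqrt_lt' two_pos).2 (by norm_num))
  have hpos : (0 : ℝ) < 1 / √2 := by positivity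
  refine ⟨norm_Φtri, sum_inner_smul_Φtri, angleSet_Φtri, ?_, ?_⟩
  · rw [angleSet_Φtri, Set.ncard_eq_three]
    exact ⟨_, _, _, half_lt.ne', hpos.ne', by norm_num, rfl⟩
  · rw [angleSet_Φtri]
    refine ⟨Set.mem_insert _ _, ?_⟩
    rintro r (rfl | rfl | rfl)
    exacts [le_rfl, half_lt.le, hpos.le]
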